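/- Shannon's theorem: Let E be an encryption scheme with |K| = |M| = |C| and perfect correctness. Then E is perfectly secure if and only if (1) for every message m and ciphertext c, the probability over uniform k that Enc(k,m) = c equals 1/|M|, and (2) for every message m and ciphertext c there exists a unique key k with Enc(k,m) = c. -/

import Mathlib

/-!
Correctness makes every `Enc k` injective, hence a bijection `M ≃ C` since `|M| = |C|`.
Double counting the pairs `(k, m)` with `Enc k m = c` then gives `∑ₘ #{k | Enc k m = c} = |K|`.
Under perfect security all summands are equal, so each is `|K| / |M| = 1`: exactly one key
maps `m` to `c`. Conversely, if every count is `1` the counts do not depend on `m`.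
-/

open Finset

section DoubleCounting

variable {K M C : Type*} [Fintype K] [Fintype M] [DecidableEq C]

lemma sum_card_filter_apply_eq_card_of_bijective (f : K → M → C)
    (hf : ∀ k, Function.Bijective (f k)) (c : C) :
    ∑ m, #{k | f k m = c} = Fintype.card K := by
  have hfibre : ∀ k, #{m | f k m = c} = 1 := fun k =>
    (Fintype.existsUnique_iff_card_one _).1 ((hf k).existsUnique c)
  calc ∑ m, #{k | f k m = c} = ∑ k, #{m | f k m = c} :=
        (sum_card_bipartiteAbove_eq_sum_card_bipartiteBelow (fun k m => f k m = c)).symm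
    _ = Fintype.card K := by simp [hfibre]

lemma card_mul_card_filter_apply_eq_card (f : K → M → C) (hf : ∀ k, Function.Bijective (f k))
    (hconst : ∀ m₀ m₁ c, #{k | f k m₀ = c} = #{k | f k m₁ = c}) (m : M) (c : C) :
    Fintype.card M * #{k | f k m = c} = Fintype.card K := by
  rw [← sum_card_filter_apply_eq_card_of_bijective f hf c, ← smul_eq_mul, ← card_univ,
    ← sum_const]
  exact sum_congr rfl fun m' _ => hconst m m' c

end DoubleCounting

/-- Shannon's theorem. -/
theorem shannon_theorem
    {K M C : Type} [Fintype K] [Fintype M] [Fintype C]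
    [DecidableEq C]
    (Enc : K → M → C) (Dec : K → C → M)
    (correct : ∀ k m, Dec k (Enc k m) = m)
    (hKM : Fintype.card K = Fintype.card M)
    (hMC : Fintype.card M = Fintype.card C) :
    (∀ m₀ m₁ : M, ∀ c : C,
      (Finset.univ.filter (fun k : K => Enc k m₀ = c)).card
        = (Finset.univ.filter (fun k : K => Enc k m₁ = c)).card)
    ↔
    ((∀ m : M, ∀ c : C,
        ((Finset.univ.filter (fun k : K => Enc k m = c)).card : ℚ)
          / (Fintype.card K : ℚ) = 1 / (Fintype.card M : ℚ)) ∧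
      (∀ m : M, ∀ c : C, ∃! k : K, Enc k m = c)) := by
  have hbij : ∀ k, Function.Bijective (Enc k) := fun k =>
    (Fintype.bijective_iff_injective_and_card _).2
      ⟨Function.LeftInverse.injective (g := Dec k) (correct k), hMC⟩
  refine ⟨fun hsecure => ?_, fun ⟨_, hunique⟩ m₀ m₁ c => ?_⟩
  · have hone : ∀ m c, #{k | Enc k m = c} = 1 := fun m c =>
      Nat.eq_of_mul_eq_mul_left (Fintype.card_pos_iff.2 ⟨m⟩) <| by
        rw [card_mul_card_filter_apply_eq_card Enc hbij hsecure, hKM, mul_one]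
    refine ⟨fun m c => ?_, fun m c => (Fintype.existsUnique_iff_card_one _).2 (hone m c)⟩
    rw [hone m c, hKM, Nat.cast_one]
  · rw [(Fintype.existsUnique_iff_card_one _).1 (hunique m₀ c),
      (Fintype.existsUnique_iff_card_one _).1 (hunique m₁ c)]
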